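/- arXiv:1211.5111 — 5 statements merged into one kernel-verified Lean document; each statement's English description precedes it below -/
import Mathlib

section
/- Let β : ℝ → ℝ be a bounded measurable 1-periodic function and set β_n(t) = β(nt) for n ∈ ℕ. Then β_n ⇀ ⟨β⟩, where ⟨β⟩ = ∫_0^1 β(t) dt; that is, for every compact interval I ⊂ ℝ and every continuous θ : I → ℝ, ∫_I β(nt)θ(t) dt → ⟨β⟩ ∫_I θ(t) dt as n → ∞. -/
/-!
The function `β - ⟨β⟩` is 1-periodic with mean zero, so its primitive is bounded and
`∫_c^d (β(nt) - ⟨β⟩) dt = O(1/n)` on every interval. A uniformly bounded sequence whose integrals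
over all subintervals of `[a, b]` tend to zero also integrates every continuous `θ` to zero in the
limit, because by uniform continuity `θ` is uniformly close to a step function on a fine partition
of `[a, b]`.
-/

open MeasureTheory Filter Set Topology

namespace Function.Periodic

variable {g : ℝ → ℝ} {T : ℝ}

theorem exists_abs_intervalIntegral_le_of_integral_eq_zero (hg : Periodic g T) (hT : 0 < T)
    (h_int : IntervalIntegrable g volume 0 T) (h₀ : ∫ x in 0..T, g x = 0) :
    ∃ C, ∀ c d, |∫ x in c..d, g x| ≤ C := by
  set S := (fun t => ∫ x in 0..t, g x) '' Icc 0 T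
  refine ⟨sSup S - sInf S, fun c d => ?_⟩
  have hlo := hg.sInf_add_zsmul_le_integral_of_pos h_int hT
  have hhi := hg.integral_le_sSup_add_zsmul_of_pos h_int hT
  simp only [h₀, smul_zero, add_zero] at hlo hhi
  have hg_int := hg.intervalIntegrable₀ hT.ne' h_int
  rw [← intervalIntegral.integral_interval_sub_left (hg_int 0 d) (hg_int 0 c), abs_sub_le_iff]
  constructor <;> linarith [hlo c, hlo d, hhi c, hhi d]

theorem tendsto_intervalIntegral_comp_mul_atTop (hg : Periodic g T) (hT : 0 < T)
    (h_int : IntervalIntegrable g volume 0 T) (h₀ : ∫ x in 0..T, g x = 0) (c d : ℝ) :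
    Tendsto (fun r => ∫ t in c..d, g (r * t)) atTop (𝓝 0) := by
  obtain ⟨C, hC⟩ := hg.exists_abs_intervalIntegral_le_of_integral_eq_zero hT h_int h₀
  refine squeeze_zero_norm' ?_ (tendsto_const_nhds (x := C) |>.div_atTop tendsto_id)
  filter_upwards [eventually_gt_atTop 0] with r hr
  rw [intervalIntegral.integral_comp_mul_left g hr.ne', norm_smul, norm_inv, Real.norm_eq_abs,
    Real.norm_eq_abs, abs_of_pos hr, inv_mul_eq_div, id]
  exact div_le_div_of_nonneg_right (hC _ _) hr.le

end Function.Periodic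

theorem intervalIntegrable_of_abs_le {f : ℝ → ℝ} {K : ℝ} (hf : AEStronglyMeasurable f)
    (hf_bdd : ∀ t, |f t| ≤ K) (c d : ℝ) : IntervalIntegrable f volume c d :=
  (intervalIntegrable_const (c := K)).mono_fun' hf.restrict (.of_forall hf_bdd)

theorem integrableOn_Icc_mul_of_abs_le {f θ : ℝ → ℝ} {K a b : ℝ} (hf : AEStronglyMeasurable f)
    (hf_bdd : ∀ t, |f t| ≤ K) (hθ : ContinuousOn θ (Icc a b)) :
    IntegrableOn (fun t => f t * θ t) (Icc a b) :=
  hθ.integrableOn_Icc.bdd_mul hf.restrict (.of_forall hf_bdd)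

theorem abs_intervalIntegral_mul_sub_le {f θ : ℝ → ℝ} {c d K η : ℝ} (hcd : c ≤ d)
    (hf : IntervalIntegrable f volume c d)
    (hfθ : IntervalIntegrable (fun t => f t * θ t) volume c d)
    (hf_bdd : ∀ t ∈ Ioc c d, |f t| ≤ K) (hθ : ∀ t ∈ Ioc c d, |θ t - θ c| ≤ η) :
    |(∫ t in c..d, f t * θ t) - θ c * ∫ t in c..d, f t| ≤ K * η * (d - c) := by
  have hsub : (∫ t in c..d, f t * θ t) - θ c * ∫ t in c..d, f t =
      ∫ t in c..d, f t * (θ t - θ c) := by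
    rw [← intervalIntegral.integral_const_mul (θ c), ← intervalIntegral.integral_sub hfθ
      (hf.const_mul (θ c))]
    congr 1 with t
    ring
  rw [hsub, ← Real.norm_eq_abs, ← abs_of_nonneg (sub_nonneg.2 hcd)]
  refine intervalIntegral.norm_integral_le_of_norm_le_const fun t ht => ?_
  rw [uIoc_of_le hcd] at ht
  rw [Real.norm_eq_abs, abs_mul]
  exact mul_le_mul (hf_bdd t ht) (hθ t ht) (abs_nonneg _) ((abs_nonneg _).trans (hf_bdd t ht))

theorem abs_intervalIntegral_mul_sub_sum_le {f θ : ℝ → ℝ} {K η : ℝ} {N : ℕ} {x : ℕ → ℝ}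
    (hx : Monotone x) (hf : ∀ k < N, IntervalIntegrable f volume (x k) (x (k + 1)))
    (hfθ : ∀ k < N, IntervalIntegrable (fun t => f t * θ t) volume (x k) (x (k + 1)))
    (hf_bdd : ∀ t, |f t| ≤ K) (hθ : ∀ k < N, ∀ t ∈ Ioc (x k) (x (k + 1)), |θ t - θ (x k)| ≤ η) :
    |(∫ t in x 0..x N, f t * θ t) - ∑ k ∈ Finset.range N, θ (x k) * ∫ t in x k..x (k + 1), f t|
      ≤ K * η * (x N - x 0) := by
  rw [← intervalIntegral.sum_integral_adjacent_intervals hfθ, ← Finset.sum_sub_distrib]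
  calc _ ≤ ∑ k ∈ Finset.range N, |(∫ t in x k..x (k + 1), f t * θ t) -
          θ (x k) * ∫ t in x k..x (k + 1), f t| := Finset.abs_sum_le_sum_abs _ _
    _ ≤ ∑ k ∈ Finset.range N, K * η * (x (k + 1) - x k) := by
        refine Finset.sum_le_sum fun k hk => ?_
        rw [Finset.mem_range] at hk
        exact abs_intervalIntegral_mul_sub_le (hx k.le_succ) (hf k hk) (hfθ k hk)
          (fun t _ => hf_bdd t) (hθ k hk)
    _ = K * η * (x N - x 0) := by rw [← Finset.mul_sum, Finset.sum_range_sub]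

theorem exists_monotone_partition_of_mesh_lt {a b δ : ℝ} (hab : a ≤ b) (hδ : 0 < δ) :
    ∃ (N : ℕ) (x : ℕ → ℝ), Monotone x ∧ x 0 = a ∧ x N = b ∧ ∀ k, x (k + 1) - x k < δ := by
  obtain ⟨N, hN⟩ := exists_nat_gt ((b - a) / δ)
  have hN0 : (0 : ℝ) < N := (div_nonneg (sub_nonneg.2 hab) hδ.le).trans_lt hN
  have hstep : 0 ≤ (b - a) / N := div_nonneg (sub_nonneg.2 hab) hN0.le
  refine ⟨N, fun k => a + k * ((b - a) / N), fun k l hkl => ?_, by simp, by field_simp; ring,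
    fun k => ?_⟩
  · dsimp only
    gcongr
  · rw [div_lt_iff₀ hδ] at hN
    calc _ = (b - a) / N := by push_cast; ring
      _ < δ := by rw [div_lt_iff₀' hN0]; exact hN

theorem tendsto_setIntegral_Icc_mul_of_tendsto_intervalIntegral {ι : Type*} {l : Filter ι}
    {f : ι → ℝ → ℝ} {K a b : ℝ} (hf_meas : ∀ i, AEStronglyMeasurable (f i))
    (hf_bdd : ∀ i t, |f i t| ≤ K)
    (hf : ∀ c ∈ Icc a b, ∀ d ∈ Icc a b, Tendsto (fun i => ∫ t in c..d, f i t) l (𝓝 0))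
    {θ : ℝ → ℝ} (hθ : ContinuousOn θ (Icc a b)) :
    Tendsto (fun i => ∫ t in Icc a b, f i t * θ t) l (𝓝 0) := by
  rcases lt_or_ge b a with hba | hab
  · simpa [Icc_eq_empty_of_lt hba] using tendsto_const_nhds
  simp only [integral_Icc_eq_integral_Ioc, ← intervalIntegral.integral_of_le hab]
  rw [Metric.tendsto_nhds]
  intro ε hε
  obtain ⟨η, hη, hKη⟩ := exists_pos_mul_lt (half_pos hε) (K * (b - a))
  obtain ⟨δ, hδ, hθδ⟩ := Metric.uniformContinuousOn_iff.mp
    (isCompact_Icc.uniformContinuousOn_of_continuous hθ) η hη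
  obtain ⟨N, x, hx, hx0, hxN, hmesh⟩ := exists_monotone_partition_of_mesh_lt hab hδ
  have hx_mem : ∀ k ≤ N, x k ∈ Icc a b := fun k hk => ⟨hx0 ▸ hx k.zero_le, hxN ▸ hx hk⟩
  have hsteps : Tendsto (fun i => ∑ k ∈ Finset.range N,
      θ (x k) * ∫ t in x k..x (k + 1), f i t) l (𝓝 0) := by
    simpa using tendsto_finsetSum (Finset.range N) fun k hk =>
      (hf _ (hx_mem k (Finset.mem_range.1 hk).le) _
        (hx_mem (k + 1) (Finset.mem_range.1 hk))).const_mul (θ (x k))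
  filter_upwards [Metric.tendsto_nhds.mp hsteps _ (half_pos hε)] with i hi
  have herr := abs_intervalIntegral_mul_sub_sum_le hx
    (fun k _ => intervalIntegrable_of_abs_le (hf_meas i) (hf_bdd i) _ _)
    (fun k hk => ((integrableOn_Icc_mul_of_abs_le (hf_meas i) (hf_bdd i) hθ).mono_set
      (uIcc_subset_Icc (hx_mem k hk.le) (hx_mem (k + 1) hk))).intervalIntegrable)
    (hf_bdd i) fun k hk t ht => by
      have ht_mem : t ∈ Icc a b := ⟨(hx_mem k hk.le).1.trans ht.1.le, ht.2.trans (hx_mem _ hk).2⟩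
      rw [← Real.dist_eq]
      refine (hθδ t ht_mem (x k) (hx_mem k hk.le) ?_).le
      rw [Real.dist_eq, abs_of_pos (sub_pos.2 ht.1)]
      linarith [hmesh k, ht.2]
  rw [hx0, hxN] at herr
  rw [Real.dist_0_eq_abs] at hi ⊢
  linarith [abs_sub_abs_le_abs_sub (∫ t in a..b, f i t * θ t)
    (∑ k ∈ Finset.range N, θ (x k) * ∫ t in x k..x (k + 1), f i t)]

/-- If `β : ℝ → ℝ` is a bounded measurable 1-periodic function and
`βₙ(t) = β(nt)`, then `βₙ ⇀ ⟨β⟩` where `⟨β⟩ = ∫_0^1 β`: for every compact interval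
`[a,b]` and every continuous `θ` on `[a,b]`,
`∫_[a,b] β(nt) θ(t) dt → ⟨β⟩ ∫_[a,b] θ(t) dt`. -/
theorem stmt1 (β : ℝ → ℝ) (hβmeas : Measurable β)
    (hβbdd : ∃ M : ℝ, ∀ t, |β t| ≤ M)
    (hper : ∀ t : ℝ, β (t + 1) = β t)
    (a b : ℝ) (θ : ℝ → ℝ) (hθ : ContinuousOn θ (Icc a b)) :
    Tendsto (fun n : ℕ => ∫ t in Icc a b, β (n * t) * θ t) atTop
      (nhds ((∫ t in (0:ℝ)..1, β t) * ∫ t in Icc a b, θ t)) := by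
  obtain ⟨M, hM⟩ := hβbdd
  set m := ∫ t in (0:ℝ)..1, β t
  have hβ_int := intervalIntegrable_of_abs_le hβmeas.aestronglyMeasurable hM
  have hper' : Function.Periodic (fun t => β t - m) 1 := fun t => by simp only [hper t]
  have hmean : ∫ t in (0:ℝ)..1, (β t - m) = 0 := by
    simp [intervalIntegral.integral_sub (hβ_int 0 1) intervalIntegrable_const, m]
  have hosc : ∀ c d, Tendsto (fun n : ℕ => ∫ t in c..d, (β (n * t) - m)) atTop (𝓝 0) :=
    fun c d => (hper'.tendsto_intervalIntegral_comp_mul_atTop one_pos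
      ((hβ_int 0 1).sub intervalIntegrable_const) hmean c d).comp tendsto_natCast_atTop_atTop
  have hmeas : ∀ n : ℕ, AEStronglyMeasurable fun t => β (n * t) - m := fun n =>
    ((hβmeas.comp (measurable_const_mul _)).sub measurable_const).aestronglyMeasurable
  have hbdd : ∀ (n : ℕ) t, |β (n * t) - m| ≤ M + |m| := fun n t =>
    (abs_sub _ _).trans (by gcongr; exact hM _)
  have hsplit : ∀ n : ℕ, ∫ t in Icc a b, β (n * t) * θ t =
      (∫ t in Icc a b, (β (n * t) - m) * θ t) + m * ∫ t in Icc a b, θ t := fun n => by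
    rw [← integral_const_mul, ← integral_add
      (integrableOn_Icc_mul_of_abs_le (hmeas n) (hbdd n) hθ) (hθ.integrableOn_Icc.const_mul m)]
    congr 1 with t
    ring
  simpa only [hsplit, zero_add] using
    (tendsto_setIntegral_Icc_mul_of_tendsto_intervalIntegral hmeas hbdd
      (fun c _ d _ => hosc c d) hθ).add_const (m * ∫ t in Icc a b, θ t)
end

section
/- Let Φ be a strongly continuous one-parameter unitary group on a complex Hilbert space H, and let (α_n) be a sequence of locally integrable real-valued functions on ℝ with α_n ⇀ 1. Define τ_n(t,t') = ∫_{t'}^{t} α_n(s) ds and the propagators Φ^n(t,t') = Φ(τ_n(t,t')). Then for every u ∈ H and every t, t' ∈ ℝ, Φ^n(t,t')u converges to Φ(t−t')u in H as n → ∞. Moreover, if in addition there is a locally integrable ᾱ with |α_n(t)| ≤ ᾱ(t) for a.e. t and all n, then for every u ∈ H and every bounded interval I the convergence is uniform in (t,t') ∈ I × I, i.e. sup_{t,t'∈I} ‖Φ^n(t,t')u − Φ(t−t')u‖ → 0. -/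
/-!
Testing the weak convergence against `θ = 1` gives `τₙ(t,t') → t - t'`, and the orbit map
`t ↦ Φ(t)u` is continuous. Under the domination `|αₙ| ≤ ᾱ` the primitives of the `αₙ`
share the modulus of continuity of the primitive of `ᾱ`, so they are equicontinuous and their
pointwise convergence is uniform on compact sets (Ascoli). Since `Φ` is an isometric group,
the orbit map is uniformly continuous, and composing with it preserves uniform convergence.
-/

open MeasureTheory Filter Set Topology intervalIntegral

theorem EquicontinuousOn.tendstoUniformlyOn_of_tendsto {ι X α : Type*} [TopologicalSpace X]
    [UniformSpace α] {F : ι → X → α} {f : X → α} {K : Set X} {l : Filter ι}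
    (hK : IsCompact K) (hF : EquicontinuousOn F K)
    (h : ∀ x ∈ K, Tendsto (F · x) l (𝓝 (f x))) : TendstoUniformlyOn F f l K := by
  have := (EquicontinuousOn.tendsto_uniformOnFun_iff_pi' (𝔖 := {K}) (by simpa using hK)
    (by simpa using hF) l f).2 (tendsto_pi_nhds.2 fun x => h x (by simpa using x.2))
  exact UniformOnFun.tendsto_iff_tendstoUniformlyOn.1 this K rfl

theorem MeasureTheory.LocallyIntegrable.intervalIntegrable {f : ℝ → ℝ}
    (hf : LocallyIntegrable f volume) (a b : ℝ) : IntervalIntegrable f volume a b :=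
  (hf.integrableOn_isCompact isCompact_uIcc).intervalIntegrable

theorem tendsto_intervalIntegral_of_weakly_one {αs : ℕ → ℝ → ℝ}
    (hweak : ∀ a b : ℝ, ∀ θ : ℝ → ℝ, ContinuousOn θ (Icc a b) →
      Tendsto (fun n => ∫ t in Icc a b, αs n t * θ t) atTop (𝓝 (∫ t in Icc a b, θ t)))
    (t t' : ℝ) : Tendsto (fun n => ∫ s in t'..t, αs n s) atTop (𝓝 (t - t')) := by
  have hle : ∀ a b : ℝ, a ≤ b →
      Tendsto (fun n => ∫ s in a..b, αs n s) atTop (𝓝 (b - a)) := by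
    intro a b hab
    simpa [integral_of_le hab, ← integral_Icc_eq_integral_Ioc, hab] using
      hweak a b 1 continuousOn_const
  rcases le_total t' t with h | h
  · exact hle t' t h
  · simpa [integral_symm t'] using (hle t t' h).neg

theorem equicontinuous_primitive_of_abs_le {ι : Type*} {f : ι → ℝ → ℝ} {g : ℝ → ℝ}
    (hf : ∀ i, LocallyIntegrable (f i) volume) (hg : LocallyIntegrable g volume)
    (hfg : ∀ i, ∀ᵐ t, |f i t| ≤ g t) (c : ℝ) :
    Equicontinuous fun i x => ∫ t in c..x, f i t := by
  have hG : Continuous fun x => ∫ t in c..x, g t :=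
    continuous_primitive hg.intervalIntegrable c
  intro x₀
  refine Metric.equicontinuousAt_of_continuity_modulus
    (fun x => |(∫ t in c..x₀, g t) - ∫ t in c..x, g t|) ?_ _
    (Eventually.of_forall fun x i => ?_)
  · simpa using ((continuous_const (y := ∫ t in c..x₀, g t)).sub hG).abs.tendsto x₀
  · rw [Real.dist_eq, integral_interval_sub_left ((hf i).intervalIntegrable _ _)
      ((hf i).intervalIntegrable _ _), integral_interval_sub_left (hg.intervalIntegrable _ _)
      (hg.intervalIntegrable _ _)]
    refine norm_integral_le_abs_of_norm_le (f := f i) (ae_restrict_of_ae ?_)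
      (hg.intervalIntegrable _ _)
    simpa only [Real.norm_eq_abs] using hfg i

theorem tendstoUniformlyOn_intervalIntegral_of_abs_le {ι : Type*} {l : Filter ι}
    {f : ι → ℝ → ℝ} {g : ℝ → ℝ} (hf : ∀ i, LocallyIntegrable (f i) volume)
    (hg : LocallyIntegrable g volume) (hfg : ∀ i, ∀ᵐ t, |f i t| ≤ g t)
    (hlim : ∀ t t', Tendsto (fun i => ∫ s in t'..t, f i s) l (𝓝 (t - t')))
    {K : Set ℝ} (hK : IsCompact K) :
    TendstoUniformlyOn (fun i (p : ℝ × ℝ) => ∫ s in p.2..p.1, f i s) (fun p => p.1 - p.2) l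
      (K ×ˢ K) := by
  have hP : TendstoUniformlyOn (fun i x => ∫ s in 0..x, f i s) (fun x => x - 0) l K :=
    ((equicontinuous_primitive_of_abs_le hf hg hfg 0).equicontinuousOn K)
      |>.tendstoUniformlyOn_of_tendsto hK fun x _ => hlim x 0
  have hdiff := ((hP.comp Prod.fst).mono (prod_subset_preimage_fst K K)).sub
    ((hP.comp Prod.snd).mono (prod_subset_preimage_snd K K))
  refine (hdiff.congr (Eventually.of_forall fun i p _ => ?_)).congr_right fun p _ => ?_
  · exact integral_interval_sub_left ((hf i).intervalIntegrable _ _)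
      ((hf i).intervalIntegrable _ _)
  · simp

section IsometricGroup

variable {𝕜 H : Type*} [NormedField 𝕜] [NormedAddCommGroup H] [NormedSpace 𝕜 H]
  {Φ : ℝ → H →L[𝕜] H}

theorem dist_apply_eq_dist_apply_sub (hgrp : ∀ s t : ℝ, Φ (s + t) = (Φ s).comp (Φ t))
    (hiso : ∀ (t : ℝ) (u : H), ‖Φ t u‖ = ‖u‖) (u : H) (s t : ℝ) :
    dist (Φ s u) (Φ t u) = dist (Φ (s - t) u) u := by
  have : Φ s u = Φ t (Φ (s - t) u) := by
    rw [← ContinuousLinearMap.comp_apply, ← hgrp, add_sub_cancel]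
  rw [this, dist_eq_norm, ← map_sub, hiso, dist_eq_norm]

theorem uniformContinuous_apply_of_continuous (hΦ0 : Φ 0 = ContinuousLinearMap.id 𝕜 H)
    (hgrp : ∀ s t : ℝ, Φ (s + t) = (Φ s).comp (Φ t))
    (hiso : ∀ (t : ℝ) (u : H), ‖Φ t u‖ = ‖u‖) {u : H}
    (hcont : Continuous fun t => Φ t u) :
    UniformContinuous fun t => Φ t u := by
  rw [Metric.uniformContinuous_iff]
  intro ε hε
  obtain ⟨δ, hδ, hδε⟩ := Metric.continuousAt_iff.1 (hcont.continuousAt (x := 0)) ε hε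
  refine ⟨δ, hδ, fun s t hst => ?_⟩
  rw [dist_apply_eq_dist_apply_sub hgrp hiso]
  simpa [hΦ0] using hδε (x := s - t) (by simpa [Real.dist_eq] using hst)

end IsometricGroup

theorem stmt2_general {H : Type*} [NormedAddCommGroup H] [InnerProductSpace ℂ H]
    (Φ : ℝ → H →L[ℂ] H)
    (hΦ0 : Φ 0 = ContinuousLinearMap.id ℂ H)
    (hgrp : ∀ s t : ℝ, Φ (s + t) = (Φ s).comp (Φ t))
    (hiso : ∀ (t : ℝ) (u : H), ‖Φ t u‖ = ‖u‖)
    (hcont : ∀ u : H, Continuous fun t => Φ t u)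
    (αs : ℕ → ℝ → ℝ)
    (hαs : ∀ n, LocallyIntegrable (αs n) volume)
    (hweak : ∀ a b : ℝ, ∀ θ : ℝ → ℝ, ContinuousOn θ (Icc a b) →
      Tendsto (fun n => ∫ t in Icc a b, αs n t * θ t) atTop
        (nhds (∫ t in Icc a b, θ t))) :
    (∀ (u : H) (t t' : ℝ),
      Tendsto (fun n => Φ (∫ s in t'..t, αs n s) u) atTop (nhds (Φ (t - t') u)))
    ∧
    (∀ αbar : ℝ → ℝ, LocallyIntegrable αbar volume →
      (∀ n, ∀ᵐ t ∂volume, |αs n t| ≤ αbar t) →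
      ∀ (u : H) (a b : ℝ),
        TendstoUniformlyOn
          (fun n (p : ℝ × ℝ) => Φ (∫ s in p.2..p.1, αs n s) u)
          (fun p => Φ (p.1 - p.2) u) atTop (Icc a b ×ˢ Icc a b)) := by
  have hτ := tendsto_intervalIntegral_of_weakly_one hweak
  refine ⟨fun u t t' => ((hcont u).tendsto _).comp (hτ t t'), ?_⟩
  intro αbar hαbar hdom u a b
  exact (uniformContinuous_apply_of_continuous hΦ0 hgrp hiso (hcont u)).comp_tendstoUniformlyOn
    (tendstoUniformlyOn_intervalIntegral_of_abs_le hαs hαbar hdom hτ isCompact_Icc)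

/-- Let `Φ` be a strongly continuous one-parameter unitary group on a
complex Hilbert space `H` and let `αs n ⇀ 1` weakly. With `τₙ(t,t') = ∫_{t'}^t αs n`,
the propagators `Φ(τₙ(t,t'))u` converge to `Φ(t-t')u` for every `u, t, t'`; moreover, if
`|αs n| ≤ ᾱ` a.e. with `ᾱ` locally integrable, the convergence is uniform on `I × I`
for every bounded interval `I = [a,b]`. -/
theorem stmt2 {H : Type*} [NormedAddCommGroup H] [InnerProductSpace ℂ H] [CompleteSpace H]
    (Φ : ℝ → H →L[ℂ] H)
    (hΦ0 : Φ 0 = ContinuousLinearMap.id ℂ H)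
    (hgrp : ∀ s t : ℝ, Φ (s + t) = (Φ s).comp (Φ t))
    (hiso : ∀ (t : ℝ) (u : H), ‖Φ t u‖ = ‖u‖)
    (hcont : ∀ u : H, Continuous fun t => Φ t u)
    (αs : ℕ → ℝ → ℝ)
    (hαs : ∀ n, LocallyIntegrable (αs n) volume)
    (hweak : ∀ a b : ℝ, ∀ θ : ℝ → ℝ, ContinuousOn θ (Icc a b) →
      Tendsto (fun n => ∫ t in Icc a b, αs n t * θ t) atTop
        (nhds (∫ t in Icc a b, θ t))) :
    (∀ (u : H) (t t' : ℝ),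
      Tendsto (fun n => Φ (∫ s in t'..t, αs n s) u) atTop (nhds (Φ (t - t') u)))
    ∧
    (∀ αbar : ℝ → ℝ, LocallyIntegrable αbar volume →
      (∀ n, ∀ᵐ t ∂volume, |αs n t| ≤ αbar t) →
      ∀ (u : H) (a b : ℝ),
        TendstoUniformlyOn
          (fun n (p : ℝ × ℝ) => Φ (∫ s in p.2..p.1, αs n s) u)
          (fun p => Φ (p.1 - p.2) u) atTop (Icc a b ×ˢ Icc a b)) :=
  stmt2_general Φ hΦ0 hgrp hiso hcont αs hαs hweak
end

section
/- Let H be a Hilbert space, β : ℝ → ℝ a bounded measurable 1-periodic function, n ∈ ℕ with n ≥ 1, h_n = 1/n, and β_n(t) = β(nt). Let v : [0, h_n] → H satisfy v(t) = v(0) + ∫_0^t v_t(t') dt' for a Bochner-integrable function v_t with ‖v_t(t')‖ ≤ M for a.e. t' ∈ [0, h_n]. If ∫_0^1 β(t) dt = 0 or v(0) = 0, then ‖∫_0^{h_n} β_n(t) v(t) dt‖ ≤ (1/2) ‖β‖_{L^∞} M h_n². -/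
open MeasureTheory Filter Set

/-! Write `v = v 0 + w` with `w t = ∫₀ᵗ v_t`, so that `‖w t‖ ≤ M t`. The constant part contributes
`(∫₀^{1/n} β(n t) dt) • v 0 = (1/n) (∫₀¹ β) • v 0`, which vanishes under either alternative, and
the remaining part is at most `∫₀^{1/n} Mβ M t dt = Mβ M / (2 n²)`. -/

section PrimitiveEstimates

variable {E : Type*} [NormedAddCommGroup E] [NormedSpace ℝ E]

theorem norm_integral_smul_primitive_le {b : ℝ → ℝ} {g : ℝ → E} {h B M : ℝ} (hh : 0 ≤ h)
    (hb : ∀ᵐ t, t ∈ Ioc 0 h → |b t| ≤ B) (hg : ∀ᵐ t, t ∈ Ioc 0 h → ‖g t‖ ≤ M) :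
    ‖∫ t in (0:ℝ)..h, b t • ∫ s in (0:ℝ)..t, g s‖ ≤ B * M * h ^ 2 / 2 := by
  have hprim : ∀ t ∈ Ioc 0 h, ‖∫ s in (0:ℝ)..t, g s‖ ≤ M * t := fun t ht ↦ by
    have := intervalIntegral.norm_integral_le_of_norm_le_const_ae <| hg.mono fun s hs hst ↦
      hs (Ioc_subset_Ioc_right ht.2 (uIoc_of_le ht.1.le ▸ hst))
    rwa [sub_zero, abs_of_pos ht.1] at this
  calc ‖∫ t in (0:ℝ)..h, b t • ∫ s in (0:ℝ)..t, g s‖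
      ≤ ∫ t in (0:ℝ)..h, B * M * t := by
        refine intervalIntegral.norm_integral_le_of_norm_le hh ?_
          ((continuous_const_mul _).intervalIntegrable _ _)
        filter_upwards [hb] with t hbt ht
        rw [norm_smul, Real.norm_eq_abs, mul_assoc]
        exact mul_le_mul (hbt ht) (hprim t ht) (norm_nonneg _) ((abs_nonneg _).trans (hbt ht))
    _ = B * M * h ^ 2 / 2 := by rw [intervalIntegral.integral_const_mul, integral_id]; ring

theorem integral_smul_eq_add_integral_smul_primitive [CompleteSpace E] {b : ℝ → ℝ}
    {v g : ℝ → E} {h : ℝ} (hh : 0 ≤ h) (hb : IntervalIntegrable b volume 0 h)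
    (hg : IntervalIntegrable g volume 0 h)
    (hv : ∀ t ∈ Icc 0 h, v t = v 0 + ∫ s in (0:ℝ)..t, g s) :
    ∫ t in (0:ℝ)..h, b t • v t =
      (∫ t in (0:ℝ)..h, b t) • v 0 + ∫ t in (0:ℝ)..h, b t • ∫ s in (0:ℝ)..t, g s := by
  have hprim : ContinuousOn (fun t ↦ ∫ s in (0:ℝ)..t, g s) (uIcc 0 h) :=
    intervalIntegral.continuousOn_primitive_interval' hg left_mem_uIcc
  rw [← intervalIntegral.integral_smul_const,
    ← intervalIntegral.integral_add (hb.smul_continuousOn continuousOn_const)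
      (hb.smul_continuousOn hprim)]
  refine intervalIntegral.integral_congr fun t ht ↦ ?_
  rw [uIcc_of_le hh] at ht
  simp only [hv t ht, smul_add]

end PrimitiveEstimates

theorem stmt6_general {H : Type*} [NormedAddCommGroup H] [InnerProductSpace ℂ H] [CompleteSpace H]
    (β : ℝ → ℝ) (hβmeas : Measurable β) (Mβ : ℝ)
    (hβbdd : ∀ᵐ t ∂volume, |β t| ≤ Mβ)
    (n : ℕ)
    (v vt : ℝ → H) (M : ℝ)
    (hvt : IntervalIntegrable vt volume 0 (1 / (n:ℝ)))
    (hv : ∀ t ∈ Icc (0:ℝ) (1 / (n:ℝ)), v t = v 0 + ∫ s in (0:ℝ)..t, vt s)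
    (hM : ∀ᵐ t ∂(volume.restrict (Icc (0:ℝ) (1 / (n:ℝ)))), ‖vt t‖ ≤ M)
    (hzero : (∫ t in (0:ℝ)..1, β t) = 0 ∨ v 0 = 0) :
    ‖∫ t in (0:ℝ)..(1 / (n:ℝ)), β (n * t) • v t‖ ≤
      (1 / 2) * Mβ * M * (1 / (n:ℝ)) ^ 2 := by
  rcases Nat.eq_zero_or_pos n with rfl | hn
  · simp
  have hn₀ : (n:ℝ) ≠ 0 := by positivity
  have hh : (0:ℝ) ≤ 1 / n := by positivity
  have hβn : ∀ᵐ t, |β (n * t)| ≤ Mβ := (Measure.quasiMeasurePreserving_smul volume hn₀).ae hβbdd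
  have hβn_int : IntervalIntegrable (fun t ↦ β (n * t)) volume 0 (1 / n) :=
    (intervalIntegrable_iff_integrableOn_Ioc_of_le hh).2 <|
      .of_bound measure_Ioc_lt_top (hβmeas.comp (measurable_const_mul _)).aestronglyMeasurable
        Mβ (ae_restrict_of_ae hβn)
  have hmean : (∫ t in (0:ℝ)..1 / n, β (n * t)) • v 0 = 0 := by
    rcases hzero with hβ | hv0
    · rw [intervalIntegral.integral_comp_mul_left _ hn₀, mul_zero, mul_one_div_cancel hn₀, hβ,
        smul_zero, zero_smul]
    · rw [hv0, smul_zero]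
  rw [integral_smul_eq_add_integral_smul_primitive hh hβn_int hvt hv, hmean, zero_add]
  convert norm_integral_smul_primitive_le hh (hβn.mono fun t ht _ ↦ ht)
    (((ae_restrict_iff' measurableSet_Icc).1 hM).mono fun t ht ht' ↦ ht (Ioc_subset_Icc_self ht'))
    using 1
  ring

/-- Let `β` be bounded (essentially by `Mβ`), measurable and 1-periodic,
`n ≥ 1`, `hₙ = 1/n`, `βₙ(t) = β(nt)`. If `v(t) = v(0) + ∫_0^t v_t` on `[0, hₙ]` with
`‖v_t‖ ≤ M` a.e. there, and either `∫_0^1 β = 0` or `v(0) = 0`, then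
`‖∫_0^{hₙ} βₙ(t) v(t) dt‖ ≤ (1/2) Mβ M hₙ²`. -/
theorem stmt6 {H : Type*} [NormedAddCommGroup H] [InnerProductSpace ℂ H] [CompleteSpace H]
    (β : ℝ → ℝ) (hβmeas : Measurable β) (Mβ : ℝ)
    (hβbdd : ∀ᵐ t ∂volume, |β t| ≤ Mβ)
    (hper : ∀ t : ℝ, β (t + 1) = β t)
    (n : ℕ) (hn : 1 ≤ n)
    (v vt : ℝ → H) (M : ℝ)
    (hvt : IntervalIntegrable vt volume 0 (1 / (n:ℝ)))
    (hv : ∀ t ∈ Icc (0:ℝ) (1 / (n:ℝ)), v t = v 0 + ∫ s in (0:ℝ)..t, vt s)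
    (hM : ∀ᵐ t ∂(volume.restrict (Icc (0:ℝ) (1 / (n:ℝ)))), ‖vt t‖ ≤ M)
    (hzero : (∫ t in (0:ℝ)..1, β t) = 0 ∨ v 0 = 0) :
    ‖∫ t in (0:ℝ)..(1 / (n:ℝ)), β (n * t) • v t‖ ≤
      (1 / 2) * Mβ * M * (1 / (n:ℝ)) ^ 2 :=
  stmt6_general β hβmeas Mβ hβbdd n v vt M hvt hv hM hzero
end

section
/- Let H be a complex Hilbert space, Φ^A a strongly continuous one-parameter unitary group on H, and B : H → H a map with B(0) = 0 that is Lipschitz on bounded sets (for every R > 0 there is L > 0 with ‖B(u) − B(v)‖ ≤ L‖u − v‖ whenever ‖u‖, ‖v‖ ≤ R). Then for every u_0 ∈ H there exist T > 0 and a unique u ∈ C([0,T], H) satisfying the integral equation u(t) = Φ^A(t)u_0 − i ∫_0^t Φ^A(t−t') B(u(t')) dt' for all t ∈ [0,T]. -/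
/-!
Picard iteration for the Duhamel formula. Since `Φ` is isometric and strongly continuous,
`(t, x) ↦ Φ t x` is jointly continuous, so the Duhamel map
`u ↦ (t ↦ Φ t u₀ - i ∫₀ᵗ Φ (t - s) (B (u s)) ds)` preserves continuity. With `L` the
Lipschitz constant of `B` on the ball of radius `R = 2‖u₀‖ + 1` and `T = 1 / (2L)`, it maps
the `R`-ball of `C([0, T], H)` into itself as a `1/2`-contraction, whose fixed point is the
solution. Two solutions `u, v` satisfy `‖u t - v t‖ ≤ L' ∫₀ᵗ ‖u s - v s‖ ds` with `L'` the
Lipschitz constant on a ball containing both, so they agree by Grönwall's inequality.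
-/

open MeasureTheory Filter Set Topology

def LipschitzOnBoundedSets {E F : Type*} [SeminormedAddCommGroup E] [SeminormedAddCommGroup F]
    (B : E → F) : Prop :=
  ∀ R > (0:ℝ), ∃ L > (0:ℝ), ∀ u v : E, ‖u‖ ≤ R → ‖v‖ ≤ R → ‖B u - B v‖ ≤ L * ‖u - v‖

theorem LipschitzOnBoundedSets.continuous {E F : Type*} [SeminormedAddCommGroup E]
    [SeminormedAddCommGroup F] {B : E → F} (hB : LipschitzOnBoundedSets B) : Continuous B := by
  refine continuous_iff_continuousAt.2 fun x => ?_
  obtain ⟨L, hL0, hL⟩ := hB (‖x‖ + 1) (by positivity)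
  have hLip : LipschitzOnWith ⟨L, hL0.le⟩ B (Metric.closedBall 0 (‖x‖ + 1)) :=
    LipschitzOnWith.of_dist_le_mul fun u hu v hv => by
      rw [dist_eq_norm, dist_eq_norm]; exact hL u v (by simpa using hu) (by simpa using hv)
  exact hLip.continuousOn.continuousAt (Metric.closedBall_mem_nhds_of_mem (by simp))

theorem continuous_uncurry_of_norm_apply_le {𝕜 X E F : Type*} [NontriviallyNormedField 𝕜]
    [TopologicalSpace X] [SeminormedAddCommGroup E] [NormedSpace 𝕜 E]
    [SeminormedAddCommGroup F] [NormedSpace 𝕜 F] {Φ : X → E →L[𝕜] F}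
    (hΦn : ∀ t x, ‖Φ t x‖ ≤ ‖x‖) (hΦ : ∀ x, Continuous fun t => Φ t x) :
    Continuous fun p : X × E => Φ p.1 p.2 := by
  refine continuous_iff_continuousAt.2 fun ⟨t₀, x₀⟩ => ?_
  have hsmall : Tendsto (fun p : X × E => Φ p.1 (p.2 - x₀)) (𝓝 (t₀, x₀)) (𝓝 0) :=
    squeeze_zero_norm (fun p => hΦn p.1 _)
      ((continuous_snd.sub continuous_const).norm.tendsto' (t₀, x₀) 0 (by simp))
  simpa [ContinuousAt] using hsmall.add (((hΦ x₀).comp continuous_fst).tendsto (t₀, x₀))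

theorem eqOn_zero_of_le_mul_integral {φ : ℝ → ℝ} {K a b : ℝ} (hφ : ContinuousOn φ (Icc a b))
    (hφ0 : ∀ t ∈ Icc a b, 0 ≤ φ t) (hle : ∀ t ∈ Icc a b, φ t ≤ K * ∫ s in a..t, φ s) :
    EqOn φ 0 (Icc a b) := by
  intro t ht
  have hab : a ≤ b := ht.1.trans ht.2
  have hderiv : ∀ t ∈ Ico a b,
      HasDerivWithinAt (fun t => ∫ s in a..t, φ s) (φ t) (Ici t) t := by
    intro t ht
    have hnhds : Icc a b ∈ 𝓝[>] t := Icc_mem_nhdsGT_of_mem ht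
    exact intervalIntegral.integral_hasDerivWithinAt_right
      ((hφ.mono (Icc_subset_Icc_right ht.2.le)).intervalIntegrable_of_Icc ht.1)
      ((hφ.stronglyMeasurableAtFilter_nhdsWithin measurableSet_Icc t).filter_mono
        (nhdsWithin_le_of_mem hnhds))
      ((hφ t (Ico_subset_Icc_self ht)).mono_of_mem_nhdsWithin hnhds)
  have hprim : ∫ s in a..t, φ s = 0 := by
    refine eq_zero_of_abs_deriv_le_mul_abs_self_of_eq_zero_right (K := K) ?_ hderiv (by simp)
      (fun s hs => ?_) t ht
    · simpa [uIcc_of_le hab] using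
        intervalIntegral.continuousOn_primitive_interval (μ := volume) (a := a) (b := b)
          (by simpa [uIcc_of_le hab] using hφ.integrableOn_Icc)
    · rw [Real.norm_of_nonneg (hφ0 s (Ico_subset_Icc_self hs)), Real.norm_of_nonneg
        (intervalIntegral.integral_nonneg hs.1 fun r hr => hφ0 r ⟨hr.1, hr.2.trans hs.2.le⟩)]
      exact hle s (Ico_subset_Icc_self hs)
  exact le_antisymm (by simpa [hprim] using hle t ht) (hφ0 t ht)

section Duhamel

variable {E : Type*} [NormedAddCommGroup E] [NormedSpace ℂ E]
  {Φ : ℝ → E →L[ℂ] E} {B : E → E} {u₀ : E} {u v : ℝ → E} {t : ℝ}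

variable (Φ B u₀) in
noncomputable def duhamel (u : ℝ → E) (t : ℝ) : E :=
  Φ t u₀ - Complex.I • ∫ s in (0:ℝ)..t, Φ (t - s) (B (u s))

theorem continuous_duhamel (hΦ : Continuous fun p : ℝ × E => Φ p.1 p.2) (hB : Continuous B)
    (hu : Continuous u) : Continuous (duhamel Φ B u₀ u) :=
  (hΦ.comp (continuous_id.prodMk continuous_const)).sub
    ((intervalIntegral.continuous_parametric_intervalIntegral_of_continuous
      (f := fun t s => Φ (t - s) (B (u s)))
      (hΦ.comp ((continuous_fst.sub continuous_snd).prodMk (hB.comp (hu.comp continuous_snd))))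
      continuous_id).const_smul _)

theorem norm_duhamel_le (hΦn : ∀ t x, ‖Φ t x‖ ≤ ‖x‖) (ht : 0 ≤ t) {C : ℝ}
    (hC : ∀ s ∈ Icc 0 t, ‖B (u s)‖ ≤ C) : ‖duhamel Φ B u₀ u t‖ ≤ ‖u₀‖ + C * t := by
  have hint := intervalIntegral.norm_integral_le_of_norm_le_const
    (f := fun s => Φ (t - s) (B (u s))) fun s hs =>
      (hΦn _ _).trans (hC s (Ioc_subset_Icc_self (by rwa [uIoc_of_le ht] at hs)))
  rw [sub_zero, abs_of_nonneg ht] at hint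
  calc ‖duhamel Φ B u₀ u t‖ ≤ ‖Φ t u₀‖ + ‖Complex.I • ∫ s in (0:ℝ)..t, Φ (t - s) (B (u s))‖ :=
        norm_sub_le _ _
    _ ≤ ‖u₀‖ + C * t := by rw [norm_smul, Complex.norm_I, one_mul]; exact add_le_add (hΦn _ _) hint

theorem norm_duhamel_sub_le (hΦ : Continuous fun p : ℝ × E => Φ p.1 p.2)
    (hΦn : ∀ t x, ‖Φ t x‖ ≤ ‖x‖) (hB : Continuous B) (ht : 0 ≤ t)
    (hu : ContinuousOn u (Icc 0 t)) (hv : ContinuousOn v (Icc 0 t)) {g : ℝ → ℝ}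
    (hg : IntervalIntegrable g volume 0 t) (hBg : ∀ s ∈ Icc 0 t, ‖B (u s) - B (v s)‖ ≤ g s) :
    ‖duhamel Φ B u₀ u t - duhamel Φ B u₀ v t‖ ≤ ∫ s in (0:ℝ)..t, g s := by
  have hint : ∀ w : ℝ → E, ContinuousOn w (Icc 0 t) →
      IntervalIntegrable (fun s => Φ (t - s) (B (w s))) volume 0 t := fun w hw =>
    (hΦ.comp_continuousOn ((continuous_const.sub continuous_id).continuousOn.prodMk
      (hB.comp_continuousOn hw))).intervalIntegrable_of_Icc ht
  have hdiff : duhamel Φ B u₀ u t - duhamel Φ B u₀ v t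
      = -(Complex.I • ∫ s in (0:ℝ)..t, Φ (t - s) (B (u s) - B (v s))) := by
    simp only [duhamel, map_sub, intervalIntegral.integral_sub (hint u hu) (hint v hv)]
    rw [smul_sub]; abel
  rw [hdiff, norm_neg, norm_smul, Complex.norm_I, one_mul]
  refine (intervalIntegral.norm_integral_le_integral_norm ht).trans
    (intervalIntegral.integral_mono_on ht ?_ hg fun s hs => (hΦn _ _).trans (hBg s hs))
  exact ((hint u hu).sub (hint v hv)).norm.congr fun s _ => by simp only [map_sub]

theorem eqOn_of_eq_duhamel (hΦ : Continuous fun p : ℝ × E => Φ p.1 p.2)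
    (hΦn : ∀ t x, ‖Φ t x‖ ≤ ‖x‖) (hB : LipschitzOnBoundedSets B) {T : ℝ}
    (hu : ContinuousOn u (Icc 0 T)) (hv : ContinuousOn v (Icc 0 T))
    (hu_eq : ∀ t ∈ Icc (0:ℝ) T, u t = duhamel Φ B u₀ u t)
    (hv_eq : ∀ t ∈ Icc (0:ℝ) T, v t = duhamel Φ B u₀ v t) : EqOn u v (Icc 0 T) := by
  obtain ⟨Cu, hCu⟩ := isCompact_Icc.exists_bound_of_continuousOn hu
  obtain ⟨Cv, hCv⟩ := isCompact_Icc.exists_bound_of_continuousOn hv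
  set R := max (max Cu Cv) 1
  obtain ⟨L, -, hLip⟩ := hB R (lt_max_of_lt_right one_pos)
  have hφ : EqOn (fun t => ‖u t - v t‖) 0 (Icc 0 T) := by
    refine eqOn_zero_of_le_mul_integral (K := L) (hu.sub hv).norm (fun _ _ => norm_nonneg _)
      fun t ht => ?_
    have hsub : Icc 0 t ⊆ Icc 0 T := Icc_subset_Icc_right ht.2
    rw [hu_eq t ht, hv_eq t ht, ← intervalIntegral.integral_const_mul]
    exact norm_duhamel_sub_le hΦ hΦn hB.continuous ht.1 (hu.mono hsub) (hv.mono hsub)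
      ((continuousOn_const.mul (hu.sub hv).norm).mono hsub |>.intervalIntegrable_of_Icc ht.1)
      fun s hs => hLip _ _ ((hCu s (hsub hs)).trans (le_max_of_le_left (le_max_left _ _)))
        ((hCv s (hsub hs)).trans (le_max_of_le_left (le_max_right _ _)))
  intro t ht
  simpa [sub_eq_zero] using hφ ht

variable (Φ B u₀) in
noncomputable def picard (hΦ : Continuous fun p : ℝ × E => Φ p.1 p.2) (hB : Continuous B)
    {T : ℝ} (hT : 0 ≤ T) (f : C(Icc 0 T, E)) : C(Icc 0 T, E) :=
  ContinuousMap.restrict (Icc 0 T)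
    ⟨duhamel Φ B u₀ (ContinuousMap.IccExtend hT f),
      continuous_duhamel hΦ hB (ContinuousMap.IccExtend hT f).continuous⟩

section Picard

variable (hΦ : Continuous fun p : ℝ × E => Φ p.1 p.2) (hB : Continuous B) {T R : ℝ}
  (hT : 0 ≤ T)

theorem mapsTo_picard (hΦn : ∀ t x, ‖Φ t x‖ ≤ ‖x‖) {C : ℝ} (hR : 0 ≤ R)
    (hBR : ∀ x, ‖x‖ ≤ R → ‖B x‖ ≤ C) (hbound : ‖u₀‖ + C * T ≤ R) :
    MapsTo (picard Φ B u₀ hΦ hB hT) (Metric.closedBall 0 R) (Metric.closedBall 0 R) := by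
  intro f hf
  rw [mem_closedBall_zero_iff] at hf ⊢
  have hC : 0 ≤ C := (norm_nonneg _).trans (hBR 0 (by simpa using hR))
  refine (ContinuousMap.norm_le _ hR).2 fun t => ?_
  calc ‖duhamel Φ B u₀ (ContinuousMap.IccExtend hT f) t‖ ≤ ‖u₀‖ + C * t :=
        norm_duhamel_le hΦn t.2.1 fun s _ => hBR _ ((f.norm_coe_le_norm _).trans hf)
    _ ≤ R := le_trans (by gcongr; exact t.2.2) hbound

theorem dist_picard_le (hΦn : ∀ t x, ‖Φ t x‖ ≤ ‖x‖) {L : ℝ} (hL : 0 ≤ L)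
    (hLip : ∀ x y : E, ‖x‖ ≤ R → ‖y‖ ≤ R → ‖B x - B y‖ ≤ L * ‖x - y‖)
    {f g : C(Icc 0 T, E)} (hf : f ∈ Metric.closedBall 0 R) (hg : g ∈ Metric.closedBall 0 R) :
    dist (picard Φ B u₀ hΦ hB hT f) (picard Φ B u₀ hΦ hB hT g) ≤ L * T * dist f g := by
  rw [mem_closedBall_zero_iff] at hf hg
  refine (ContinuousMap.dist_le (by positivity)).2 fun t => ?_
  rw [dist_eq_norm]
  calc _ ≤ ∫ _ in (0:ℝ)..t, L * dist f g :=
        norm_duhamel_sub_le hΦ hΦn hB t.2.1 (ContinuousMap.IccExtend hT f).continuous.continuousOn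
          (ContinuousMap.IccExtend hT g).continuous.continuousOn intervalIntegrable_const
          fun s _ => (hLip _ _ ((f.norm_coe_le_norm _).trans hf)
            ((g.norm_coe_le_norm _).trans hg)).trans
            (by rw [← dist_eq_norm]; gcongr; exact ContinuousMap.dist_apply_le_dist _)
    _ ≤ L * T * dist f g := by
        rw [intervalIntegral.integral_const, smul_eq_mul, sub_zero, mul_comm, mul_right_comm]
        gcongr
        exact t.2.2

end Picard

theorem exists_continuous_eq_duhamel [CompleteSpace E]
    (hΦ : Continuous fun p : ℝ × E => Φ p.1 p.2)
    (hΦn : ∀ t x, ‖Φ t x‖ ≤ ‖x‖) (hB : LipschitzOnBoundedSets B) (hB0 : B 0 = 0) (u₀ : E) :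
    ∃ T > 0, ∃ u : ℝ → E, Continuous u ∧ ∀ t ∈ Icc (0:ℝ) T, u t = duhamel Φ B u₀ u t := by
  set R := 2 * ‖u₀‖ + 1
  have hR : 0 < R := by positivity
  obtain ⟨L, hL, hLip⟩ := hB R hR
  set T := 1 / (2 * L)
  have hT : 0 < T := by positivity
  have hLT : L * T = 1 / 2 := by simp only [T]; field_simp
  have hBR : ∀ x, ‖x‖ ≤ R → ‖B x‖ ≤ L * R := fun x hx => by
    simpa [hB0] using (hLip x 0 hx (by simpa using hR.le)).trans (by gcongr; simpa using hx)
  have hmaps := mapsTo_picard hΦ hB.continuous hT.le (u₀ := u₀) hΦn hR.le hBR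
    (by rw [mul_right_comm, hLT]; linarith)
  have hcontr : ContractingWith (1 / 2) (hmaps.restrict _ _ _) :=
    ⟨by norm_num, LipschitzWith.of_dist_le_mul fun f g => by
      simpa [Subtype.dist_eq, hLT] using
        dist_picard_le hΦ hB.continuous hT.le hΦn hL.le hLip f.2 g.2⟩
  obtain ⟨f, -, hf, -⟩ := hcontr.exists_fixedPoint' Metric.isClosed_closedBall.isComplete hmaps
    (Metric.mem_closedBall_self hR.le) (edist_ne_top _ _)
  refine ⟨T, hT, ContinuousMap.IccExtend hT.le f, ContinuousMap.continuous _, fun t ht => ?_⟩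
  calc ContinuousMap.IccExtend hT.le f t = f ⟨t, ht⟩ := IccExtend_of_mem _ _ ht
    _ = picard Φ B u₀ hΦ hB.continuous hT.le f ⟨t, ht⟩ := by rw [hf]
    _ = _ := rfl

end Duhamel

theorem stmt7_general {H : Type*} [NormedAddCommGroup H] [InnerProductSpace ℂ H] [CompleteSpace H]
    (Φ : ℝ → H →L[ℂ] H)
    (hiso : ∀ (t : ℝ) (u : H), ‖Φ t u‖ = ‖u‖)
    (hcont : ∀ u : H, Continuous fun t => Φ t u)
    (B : H → H) (hB0 : B 0 = 0)
    (hB : ∀ R > (0:ℝ), ∃ L > (0:ℝ), ∀ u v : H, ‖u‖ ≤ R → ‖v‖ ≤ R →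
      ‖B u - B v‖ ≤ L * ‖u - v‖)
    (u₀ : H) :
    ∃ T > (0:ℝ), ∃ u : ℝ → H,
      (ContinuousOn u (Icc 0 T) ∧
        ∀ t ∈ Icc (0:ℝ) T,
          u t = Φ t u₀ - Complex.I • ∫ s in (0:ℝ)..t, Φ (t - s) (B (u s))) ∧
      ∀ v : ℝ → H,
        (ContinuousOn v (Icc 0 T) ∧
          ∀ t ∈ Icc (0:ℝ) T,
            v t = Φ t u₀ - Complex.I • ∫ s in (0:ℝ)..t, Φ (t - s) (B (v s))) →
        EqOn u v (Icc 0 T) := by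
  have hΦn : ∀ t x, ‖Φ t x‖ ≤ ‖x‖ := fun t x => (hiso t x).le
  have hΦ := continuous_uncurry_of_norm_apply_le hΦn hcont
  obtain ⟨T, hT, u, hu, hu_eq⟩ := exists_continuous_eq_duhamel hΦ hΦn hB hB0 u₀
  exact ⟨T, hT, u, ⟨hu.continuousOn, hu_eq⟩, fun v ⟨hv, hv_eq⟩ =>
    eqOn_of_eq_duhamel hΦ hΦn hB hu.continuousOn hv hu_eq hv_eq⟩

/-- Local well-posedness: if `Φ` is a strongly continuous one-parameter
unitary group on a complex Hilbert space `H` and `B : H → H` is Lipschitz on bounded sets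
with `B 0 = 0`, then for every `u₀ ∈ H` there are `T > 0` and a unique
`u ∈ C([0,T], H)` with `u(t) = Φ(t)u₀ - i ∫_0^t Φ(t-t') B(u(t')) dt'` on `[0,T]`. -/
theorem stmt7 {H : Type*} [NormedAddCommGroup H] [InnerProductSpace ℂ H] [CompleteSpace H]
    (Φ : ℝ → H →L[ℂ] H)
    (hΦ0 : Φ 0 = ContinuousLinearMap.id ℂ H)
    (hgrp : ∀ s t : ℝ, Φ (s + t) = (Φ s).comp (Φ t))
    (hiso : ∀ (t : ℝ) (u : H), ‖Φ t u‖ = ‖u‖)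
    (hcont : ∀ u : H, Continuous fun t => Φ t u)
    (B : H → H) (hB0 : B 0 = 0)
    (hB : ∀ R > (0:ℝ), ∃ L > (0:ℝ), ∀ u v : H, ‖u‖ ≤ R → ‖v‖ ≤ R →
      ‖B u - B v‖ ≤ L * ‖u - v‖)
    (u₀ : H) :
    ∃ T > (0:ℝ), ∃ u : ℝ → H,
      (ContinuousOn u (Icc 0 T) ∧
        ∀ t ∈ Icc (0:ℝ) T,
          u t = Φ t u₀ - Complex.I • ∫ s in (0:ℝ)..t, Φ (t - s) (B (u s))) ∧
      ∀ v : ℝ → H,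
        (ContinuousOn v (Icc 0 T) ∧
          ∀ t ∈ Icc (0:ℝ) T,
            v t = Φ t u₀ - Complex.I • ∫ s in (0:ℝ)..t, Φ (t - s) (B (v s))) →
        EqOn u v (Icc 0 T) :=
  stmt7_general Φ hiso hcont B hB0 hB u₀
end

section
/- Let d ≥ 1 and ω_1, …, ω_d ∈ ℝ, and set Ω(x) = Σ_{j=1}^d ω_j² x_j². Then for every Schwartz function u : ℝ^d → ℂ, with Δu = Σ_{j=1}^d ∂²u/∂x_j², one has 2 Re ∫_{ℝ^d} (Δu)(x) conj(Ω(x) u(x)) dx ≤ 2 (Σ_{j=1}^d ω_j²) ∫_{ℝ^d} |u(x)|² dx. -/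
/-!
With the real inner product `⟪z, w⟫ = Re (w * conj z)` on `ℂ` one has
`Re (Δu * conj (Ω u)) = Ω ⟪u, Δu⟫ = ∑ⱼ Ω ⟪u, ∂ⱼ² u⟫`, so it suffices to bound each coordinate
term. For a weight `g ≥ 0` of temperate growth, integrating by parts in the direction `eⱼ` gives
`∫ g ⟪u, ∂ⱼ² u⟫ = -∫ ∂ⱼg ⟪u, ∂ⱼu⟫ - ∫ g ‖∂ⱼu‖²`, and integrating by parts once more,
`2 ∫ ∂ⱼg ⟪u, ∂ⱼu⟫ = -∫ ∂ⱼ²g ‖u‖²`. Dropping the nonpositive term `-∫ g ‖∂ⱼu‖²` leaves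
`2 ∫ g ⟪u, ∂ⱼ² u⟫ ≤ ∫ ∂ⱼ²g ‖u‖²`, and for `g = Ω` the second derivative `∂ⱼ²Ω = 2 ωⱼ²` is constant.
-/

open MeasureTheory Filter Set

noncomputable def laplacian {d : ℕ} (u : EuclideanSpace ℝ (Fin d) → ℂ)
    (x : EuclideanSpace ℝ (Fin d)) : ℂ :=
  ∑ j : Fin d,
    fderiv ℝ (fun y => fderiv ℝ u y (EuclideanSpace.single j 1)) x
      (EuclideanSpace.single j 1)

open SchwartzMap
open scoped LineDeriv

section TemperateGrowth

variable {E F : Type*} [NormedAddCommGroup E] [NormedSpace ℝ E]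
  [NormedAddCommGroup F] [NormedSpace ℝ F]

theorem Function.HasTemperateGrowth.fderiv_apply {g : E → F} (hg : g.HasTemperateGrowth)
    (v : E) : (fun x => fderiv ℝ g x v).HasTemperateGrowth := by
  have hfderiv : (fderiv ℝ g).HasTemperateGrowth := by
    refine ⟨hg.1.fderiv_right (by simp), fun n => ?_⟩
    obtain ⟨k, C, h⟩ := hg.2 (n + 1)
    exact ⟨k, C, fun x => by rw [norm_iteratedFDeriv_fderiv]; exact h x⟩
  exact (ContinuousLinearMap.apply ℝ F v).hasTemperateGrowth.comp hfderiv

theorem SchwartzMap.lineDerivOp_smulLeftCLM_apply {g : E → ℝ} (hg : g.HasTemperateGrowth)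
    (f : 𝓢(E, F)) (v x : E) :
    ∂_{v} (smulLeftCLM F g f) x = fderiv ℝ g x v • f x + g x • ∂_{v} f x := by
  have hgf : ⇑(smulLeftCLM F g f) = fun y => g y • f y := smulLeftCLM_apply hg f
  rw [lineDerivOp_apply_eq_fderiv, hgf, lineDerivOp_apply_eq_fderiv,
    fderiv_fun_smul (hg.1.differentiable (by simp) x) f.differentiableAt]
  simp only [add_comm, add_apply, ContinuousLinearMap.smulRight_apply, smul_apply]

end TemperateGrowth

namespace SchwartzMap

variable {E F : Type*} [NormedAddCommGroup E] [NormedSpace ℝ E] [FiniteDimensional ℝ E]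
  [MeasurableSpace E] [BorelSpace E] {μ : Measure E} [μ.IsAddHaarMeasure]
  [NormedAddCommGroup F] [InnerProductSpace ℝ F] {g : E → ℝ}

theorem integrable_mul_conj (f₁ f₂ : 𝓢(E, ℂ)) :
    Integrable (fun x => f₁ x * starRingEnd ℂ (f₂ x)) μ :=
  f₁.integrable.mul_bdd (Complex.continuous_conj.comp f₂.continuous).aestronglyMeasurable
    (.of_forall fun x => by
      rw [RCLike.norm_conj]
      exact f₂.norm_le_seminorm ℝ x)

theorem integrable_mul_inner (hg : g.HasTemperateGrowth) (f₁ f₂ : 𝓢(E, F)) :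
    Integrable (fun x => g x * inner ℝ (f₁ x) (f₂ x)) μ := by
  refine (bilinLeftCLM (innerSL ℝ) (smulLeftCLM F g f₂).hasTemperateGrowth f₁).integrable.congr
    (.of_forall fun x => ?_)
  simp only [bilinLeftCLM_apply, smulLeftCLM_apply_apply hg]
  exact real_inner_smul_right _ _ _

theorem integral_mul_inner_lineDerivOp_right (hg : g.HasTemperateGrowth) (f₁ f₂ : 𝓢(E, F))
    (v : E) :
    ∫ x, g x * inner ℝ (f₁ x) (∂_{v} f₂ x) ∂μ =
      -∫ x, fderiv ℝ g x v * inner ℝ (f₁ x) (f₂ x) ∂μ -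
        ∫ x, g x * inner ℝ (∂_{v} f₁ x) (f₂ x) ∂μ := by
  have hparts := integral_bilinear_lineDerivOp_right_eq_neg_left (μ := μ)
    (smulLeftCLM F g f₁) f₂ (innerSL ℝ) v
  change ∫ x, inner ℝ (smulLeftCLM F g f₁ x) (∂_{v} f₂ x) ∂μ =
    -∫ x, inner ℝ (∂_{v} (smulLeftCLM F g f₁) x) (f₂ x) ∂μ at hparts
  simp only [lineDerivOp_smulLeftCLM_apply hg, smulLeftCLM_apply_apply hg,
    inner_add_left, real_inner_smul_left] at hparts
  rw [hparts, integral_add (integrable_mul_inner (hg.fderiv_apply v) f₁ f₂)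
    (integrable_mul_inner hg _ f₂), neg_add']

theorem two_mul_integral_mul_inner_lineDerivOp_self (hg : g.HasTemperateGrowth) (f : 𝓢(E, F))
    (v : E) :
    2 * ∫ x, g x * inner ℝ (f x) (∂_{v} f x) ∂μ = -∫ x, fderiv ℝ g x v * ‖f x‖ ^ 2 ∂μ := by
  have hparts := integral_mul_inner_lineDerivOp_right (μ := μ) hg f f v
  simp only [real_inner_self_eq_norm_sq, real_inner_comm (f _) (∂_{v} f _)] at hparts
  linarith

theorem two_mul_integral_mul_inner_lineDerivOp_lineDerivOp_le (hg : g.HasTemperateGrowth)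
    (hg₀ : ∀ x, 0 ≤ g x) (f : 𝓢(E, F)) (v : E) :
    2 * ∫ x, g x * inner ℝ (f x) (∂_{v} (∂_{v} f) x) ∂μ ≤
      ∫ x, fderiv ℝ (fun y => fderiv ℝ g y v) x v * ‖f x‖ ^ 2 ∂μ := by
  have hparts := integral_mul_inner_lineDerivOp_right (μ := μ) hg f (∂_{v} f) v
  have hfirst := two_mul_integral_mul_inner_lineDerivOp_self (μ := μ) (hg.fderiv_apply v) f v
  have hkinetic : 0 ≤ ∫ x, g x * inner ℝ (∂_{v} f x) (∂_{v} f x) ∂μ :=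
    integral_nonneg fun x => mul_nonneg (hg₀ x) real_inner_self_nonneg
  linarith

end SchwartzMap

section Euclidean

variable {d : ℕ}

theorem laplacian_eq_sum_lineDerivOp (u : 𝓢(EuclideanSpace ℝ (Fin d), ℂ)) :
    laplacian u =
      ⇑(∑ j : Fin d, ∂_{EuclideanSpace.single j (1 : ℝ)} (∂_{EuclideanSpace.single j (1 : ℝ)} u) :
        𝓢(EuclideanSpace ℝ (Fin d), ℂ)) := by
  ext x
  simp only [laplacian, sum_apply]
  rfl

theorem re_integral_laplacian_mul_conj {g : EuclideanSpace ℝ (Fin d) → ℝ}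
    (hg : g.HasTemperateGrowth) (u : 𝓢(EuclideanSpace ℝ (Fin d), ℂ)) :
    (∫ x, laplacian u x * starRingEnd ℂ ((g x : ℂ) * u x)).re =
      ∑ j : Fin d, ∫ x, g x * inner ℝ (u x)
        (∂_{EuclideanSpace.single j (1 : ℝ)} (∂_{EuclideanSpace.single j (1 : ℝ)} u) x) := by
  have hintegrand : (fun x => laplacian u x * starRingEnd ℂ ((g x : ℂ) * u x)) =
      fun x => (∑ j : Fin d, ∂_{EuclideanSpace.single j (1 : ℝ)}
        (∂_{EuclideanSpace.single j (1 : ℝ)} u) : 𝓢(EuclideanSpace ℝ (Fin d), ℂ)) x *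
        starRingEnd ℂ (smulLeftCLM ℂ g u x) := by
    ext x
    rw [laplacian_eq_sum_lineDerivOp, smulLeftCLM_apply_apply hg, Complex.real_smul]
  rw [hintegrand, ← RCLike.re_to_complex, ← integral_re (integrable_mul_conj _ _),
    ← integral_finsetSum _ fun j _ => integrable_mul_inner hg _ _]
  congr 1 with x
  simp only [RCLike.re_to_complex, ← Complex.inner, smulLeftCLM_apply_apply hg,
    real_inner_smul_left, sum_apply, inner_sum]

def harmonicPotential (ω : Fin d → ℝ) (x : EuclideanSpace ℝ (Fin d)) : ℝ :=
  ∑ j, ω j ^ 2 * x j ^ 2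

theorem harmonicPotential_nonneg (ω : Fin d → ℝ) (x : EuclideanSpace ℝ (Fin d)) :
    0 ≤ harmonicPotential ω x :=
  Finset.sum_nonneg fun _ _ => by positivity

theorem hasTemperateGrowth_harmonicPotential (ω : Fin d → ℝ) :
    (harmonicPotential ω).HasTemperateGrowth := by
  have hcoord (j : Fin d) : (fun x : EuclideanSpace ℝ (Fin d) => x j).HasTemperateGrowth :=
    (EuclideanSpace.proj j).hasTemperateGrowth
  unfold harmonicPotential
  fun_prop

theorem hasFDerivAt_harmonicPotential (ω : Fin d → ℝ) (x : EuclideanSpace ℝ (Fin d)) :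
    HasFDerivAt (harmonicPotential ω)
      (∑ k, (2 * ω k ^ 2 * x k) • (EuclideanSpace.proj k : EuclideanSpace ℝ (Fin d) →L[ℝ] ℝ))
      x := by
  refine HasFDerivAt.fun_sum fun k _ => ?_
  refine ((PiLp.hasFDerivAt_apply (𝕜 := ℝ) 2 x k).pow 2).const_mul (ω k ^ 2) |>.congr_fderiv ?_
  ext w
  simp
  ring

theorem fderiv_harmonicPotential_single (ω : Fin d → ℝ) (j : Fin d) :
    (fun x => fderiv ℝ (harmonicPotential ω) x (EuclideanSpace.single j 1)) =
      fun x => 2 * ω j ^ 2 * x j := by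
  ext x
  simp [(hasFDerivAt_harmonicPotential ω x).fderiv]

theorem fderiv_fderiv_harmonicPotential_single (ω : Fin d → ℝ) (j : Fin d)
    (x : EuclideanSpace ℝ (Fin d)) :
    fderiv ℝ (fun y => fderiv ℝ (harmonicPotential ω) y (EuclideanSpace.single j 1)) x
      (EuclideanSpace.single j 1) = 2 * ω j ^ 2 := by
  rw [fderiv_harmonicPotential_single,
    ((PiLp.hasFDerivAt_apply (𝕜 := ℝ) 2 x j).const_mul (2 * ω j ^ 2)).fderiv]
  simp

end Euclidean

theorem stmt18_general (d : ℕ) (ω : Fin d → ℝ)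
    (u : SchwartzMap (EuclideanSpace ℝ (Fin d)) ℂ) :
    2 * (∫ x, laplacian (⇑u) x *
          (starRingEnd ℂ) (((∑ j, ω j ^ 2 * x j ^ 2 : ℝ) : ℂ) * u x)).re ≤
      2 * (∑ j, ω j ^ 2) * ∫ x, ‖u x‖ ^ 2 := by
  have hcoord (j : Fin d) :
      2 * ∫ x, harmonicPotential ω x * inner ℝ (u x)
        (∂_{EuclideanSpace.single j (1 : ℝ)} (∂_{EuclideanSpace.single j (1 : ℝ)} u) x) ≤
      2 * ω j ^ 2 * ∫ x, ‖u x‖ ^ 2 := by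
    simpa only [fderiv_fderiv_harmonicPotential_single, integral_const_mul] using
      two_mul_integral_mul_inner_lineDerivOp_lineDerivOp_le (μ := volume)
        (hasTemperateGrowth_harmonicPotential ω) (harmonicPotential_nonneg ω) u
        (EuclideanSpace.single j 1)
  calc 2 * (∫ x, laplacian (⇑u) x *
          (starRingEnd ℂ) (((∑ j, ω j ^ 2 * x j ^ 2 : ℝ) : ℂ) * u x)).re
      = ∑ j : Fin d, 2 * ∫ x, harmonicPotential ω x * inner ℝ (u x)
          (∂_{EuclideanSpace.single j (1 : ℝ)} (∂_{EuclideanSpace.single j (1 : ℝ)} u) x) := by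
        rw [← Finset.mul_sum,
          ← re_integral_laplacian_mul_conj (hasTemperateGrowth_harmonicPotential ω)]
        rfl
    _ ≤ ∑ j, 2 * ω j ^ 2 * ∫ x, ‖u x‖ ^ 2 := Finset.sum_le_sum fun j _ => hcoord j
    _ = 2 * (∑ j, ω j ^ 2) * ∫ x, ‖u x‖ ^ 2 := by rw [← Finset.sum_mul, ← Finset.mul_sum]

/-- For the quadratic potential `Ω(x) = Σ ω_j² x_j²`, every Schwartz
function `u` satisfies `2 Re ∫ Δu conj(Ω u) ≤ 2 (Σ ω_j²) ∫ |u|²`. -/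
theorem stmt18 (d : ℕ) (hd : 1 ≤ d) (ω : Fin d → ℝ)
    (u : SchwartzMap (EuclideanSpace ℝ (Fin d)) ℂ) :
    2 * (∫ x, laplacian (⇑u) x *
          (starRingEnd ℂ) (((∑ j, ω j ^ 2 * x j ^ 2 : ℝ) : ℂ) * u x)).re ≤
      2 * (∑ j, ω j ^ 2) * ∫ x, ‖u x‖ ^ 2 :=
  stmt18_general d ω u
end
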